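/- For every real a ≥ 0 and every integer j ≥ 1, Φ(a√(j+2)) − Φ(a√(j+1)) ≤ Φ(a√(j+1)) − Φ(a√j). In particular, taking j = 2, one has Φ(a√4) − Φ(a√3) ≤ Φ(a√3) − Φ(a√2), i.e., q₄ − q₃ ≤ q₃ − q₂ where q_j = Φ(a√j). -/

import Mathlib

/-! For `a ≥ 0` the map `x ↦ Φ(a√x)` is concave on `[0, ∞)`: its derivative
`φ(a√x) · a / (2√x) = (2π)^{-1/2} e^{-a²x/2} · a / (2√x)` is a product of two nonnegative
decreasing functions. Concavity makes the increments over consecutive unit steps decrease. -/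

open MeasureTheory ProbabilityTheory Real

/-- The standard normal cumulative distribution function
`Φ(x) = (1/√(2π)) ∫_{-∞}^{x} e^{-t²/2} dt`. -/
noncomputable def stdGaussianCDF (x : ℝ) : ℝ :=
  (Real.sqrt (2 * Real.pi))⁻¹ * ∫ t in Set.Iic x, Real.exp (-t ^ 2 / 2)

open Set

lemma integrable_exp_neg_sq_div_two : Integrable fun t : ℝ => exp (-t ^ 2 / 2) := by
  convert integrable_exp_neg_mul_sq (b := 1 / 2) (by norm_num) using 2 with t
  ring_nf

lemma stdGaussianCDF_eq_add_intervalIntegral (x : ℝ) :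
    stdGaussianCDF x = stdGaussianCDF 0 + (√(2 * π))⁻¹ * ∫ t in (0 : ℝ)..x, exp (-t ^ 2 / 2) := by
  rw [← intervalIntegral.integral_Iic_sub_Iic integrable_exp_neg_sq_div_two.integrableOn
    integrable_exp_neg_sq_div_two.integrableOn, stdGaussianCDF, stdGaussianCDF]
  ring

lemma hasDerivAt_stdGaussianCDF (x : ℝ) :
    HasDerivAt stdGaussianCDF ((√(2 * π))⁻¹ * exp (-x ^ 2 / 2)) x := by
  have hcont : Continuous fun t : ℝ => exp (-t ^ 2 / 2) := by fun_prop
  rw [funext stdGaussianCDF_eq_add_intervalIntegral]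
  exact ((intervalIntegral.integral_hasDerivAt_right
    integrable_exp_neg_sq_div_two.intervalIntegrable (hcont.stronglyMeasurableAtFilter _ _)
    hcont.continuousAt).const_mul _).const_add _

lemma continuous_stdGaussianCDF : Continuous stdGaussianCDF :=
  continuous_iff_continuousAt.2 fun x => (hasDerivAt_stdGaussianCDF x).continuousAt

lemma hasDerivAt_stdGaussianCDF_mul_sqrt (a : ℝ) {x : ℝ} (hx : 0 < x) :
    HasDerivAt (fun x => stdGaussianCDF (a * √x))
      ((√(2 * π))⁻¹ * exp (-(a ^ 2 * x) / 2) * (a * (1 / (2 * √x)))) x := by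
  have h := (hasDerivAt_stdGaussianCDF (a * √x)).comp x ((hasDerivAt_sqrt hx.ne').const_mul a)
  rwa [mul_pow, sq_sqrt hx.le] at h

lemma ConcaveOn.sub_le_sub_of_add_two_mul {s : Set ℝ} {f : ℝ → ℝ} (hf : ConcaveOn ℝ s f)
    {x h : ℝ} (hx : x ∈ s) (hx₂ : x + 2 * h ∈ s) (hh : 0 < h) :
    f (x + 2 * h) - f (x + h) ≤ f (x + h) - f x := by
  have := hf.slope_anti_adjacent hx hx₂ (by linarith : x < x + h) (by linarith)
  rwa [show x + 2 * h - (x + h) = h by ring, add_sub_cancel_left, div_le_div_iff_of_pos_right hh]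
    at this

lemma concaveOn_stdGaussianCDF_mul_sqrt {a : ℝ} (ha : 0 ≤ a) :
    ConcaveOn ℝ (Ici 0) fun x => stdGaussianCDF (a * √x) := by
  have hdiff : ∀ x ∈ Ioi (0 : ℝ), HasDerivAt (fun x => stdGaussianCDF (a * √x)) _ x :=
    fun x hx => hasDerivAt_stdGaussianCDF_mul_sqrt a hx
  refine AntitoneOn.concaveOn_of_deriv (convex_Ici 0) ?_ ?_ ?_
  · exact (continuous_stdGaussianCDF.comp (continuous_const.mul continuous_sqrt)).continuousOn
  · rw [interior_Ici]
    exact fun x hx => (hdiff x hx).differentiableAt.differentiableWithinAt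
  · rw [interior_Ici]
    intro x hx y hy hxy
    rw [(hdiff x hx).deriv, (hdiff y hy).deriv]
    have hx₀ : 0 < x := hx
    gcongr

theorem stmt18 (a : ℝ) (ha : 0 ≤ a) :
    (∀ j : ℕ, 1 ≤ j →
      stdGaussianCDF (a * Real.sqrt ((j : ℝ) + 2)) - stdGaussianCDF (a * Real.sqrt ((j : ℝ) + 1))
        ≤ stdGaussianCDF (a * Real.sqrt ((j : ℝ) + 1)) - stdGaussianCDF (a * Real.sqrt j))
      ∧ stdGaussianCDF (a * Real.sqrt 4) - stdGaussianCDF (a * Real.sqrt 3)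
        ≤ stdGaussianCDF (a * Real.sqrt 3) - stdGaussianCDF (a * Real.sqrt 2) := by
  have step (x : ℝ) (hx : 0 ≤ x) :
      stdGaussianCDF (a * √(x + 2)) - stdGaussianCDF (a * √(x + 1))
        ≤ stdGaussianCDF (a * √(x + 1)) - stdGaussianCDF (a * √x) := by
    simpa using (concaveOn_stdGaussianCDF_mul_sqrt ha).sub_le_sub_of_add_two_mul hx
      (show 0 ≤ x + 2 * 1 by linarith) one_pos
  refine ⟨fun j _ => step j j.cast_nonneg, ?_⟩
  convert step 2 zero_le_two using 4 <;> norm_num
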